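/- The modified Shaw–Traub algorithm simultaneously evaluates p, p' and p'': for every real r ≠ 0, the recursively defined quantities satisfy T^0_{n+1} = p(r), T^1_{n+1} = r·p'(r), and 2·T^2_{n+1} = r²·p''(r), where p' and p'' are the first and second derivatives of p. -/

import Mathlib

/-!
List the monomials of `p` at `r` from the top degree down, `u k = c_{n+1-k} r^{n+1-k}`.
By Pascal's rule the three tables are iterated partial sums of `u` with binomial weights,
`T^j_i = ∑_{k ≤ i} C(i-k, j) u_k`, so at `i = n+1` they read `∑_l C(l, j) c_l r^l`.
This is `r^j p^{(j)}(r) / j!`, since `r^j (d/dr)^j r^l = j! C(l, j) r^l`.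
-/

open Finset Nat

section MonomialDerivatives

variable {𝕜 : Type*} [NontriviallyNormedField 𝕜]

theorem pow_mul_iteratedDeriv_sum_monomial (s : Finset ℕ) (c : ℕ → 𝕜) (j : ℕ) (x : 𝕜) :
    x ^ j * iteratedDeriv j (fun y => ∑ l ∈ s, c l * y ^ l) x
      = j ! * ∑ l ∈ s, (l.choose j : 𝕜) * (c l * x ^ l) := by
  rw [iteratedDeriv_fun_sum fun l _ => by fun_prop, mul_sum, mul_sum]
  refine sum_congr rfl fun l _ => ?_
  rw [iteratedDeriv_const_mul_field, iteratedDeriv_pow]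
  rcases le_or_gt j l with hjl | hlj
  · rw [descFactorial_eq_factorial_mul_choose, ← pow_mul_pow_sub x hjl]
    push_cast
    ring
  · simp [descFactorial_eq_zero_iff_lt.mpr hlj, choose_eq_zero_of_lt hlj]

end MonomialDerivatives

section IteratedPartialSum

variable {R : Type*} [Semiring R]

def iteratedPartialSum (u : ℕ → R) (j i : ℕ) : R :=
  ∑ k ∈ range (i + 1), ((i - k).choose j : R) * u k

theorem iteratedPartialSum_zero_succ (u : ℕ → R) (i : ℕ) :
    iteratedPartialSum u 0 (i + 1) = iteratedPartialSum u 0 i + u (i + 1) := by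
  simp [iteratedPartialSum, sum_range_succ _ (i + 1)]

theorem iteratedPartialSum_succ_succ (u : ℕ → R) (j i : ℕ) :
    iteratedPartialSum u (j + 1) (i + 1)
      = iteratedPartialSum u j i + iteratedPartialSum u (j + 1) i := by
  rw [iteratedPartialSum, sum_range_succ, Nat.sub_self, choose_zero_succ, Nat.cast_zero,
    zero_mul, add_zero, iteratedPartialSum, iteratedPartialSum, ← sum_add_distrib]
  refine sum_congr rfl fun k hk => ?_
  rw [Nat.sub_add_comm (mem_range_succ_iff.mp hk), choose_succ_succ, Nat.cast_add, add_mul]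

theorem iteratedPartialSum_self (u : ℕ → R) (j : ℕ) : iteratedPartialSum u j j = u 0 := by
  rw [iteratedPartialSum, sum_range_succ', sum_eq_zero fun k hk => by
    rw [choose_eq_zero_of_lt (by have := mem_range.mp hk; omega), Nat.cast_zero, zero_mul]]
  simp

theorem iteratedPartialSum_reverse (q : ℕ → R) (j N : ℕ) :
    iteratedPartialSum (fun k => q (N - k)) j N = ∑ l ∈ range (N + 1), (l.choose j : R) * q l := by
  rw [iteratedPartialSum, ← sum_range_reflect]
  refine sum_congr rfl fun k hk => ?_
  have : k ≤ N := mem_range_succ_iff.mp hk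
  congr 3 <;> omega

theorem eq_iteratedPartialSum_zero_of_recurrence {u d T : ℕ → R} {N : ℕ} (h0 : T 0 = u 0)
    (hstep : ∀ i, 1 ≤ i → i ≤ N → T i = d (i - 1) + T (i - 1)) (hd : ∀ i < N, d i = u (i + 1))
    (i : ℕ) (hi : i ≤ N) : T i = iteratedPartialSum u 0 i := by
  induction i with
  | zero => rw [h0, iteratedPartialSum_self]
  | succ i ih =>
    rw [hstep (i + 1) (by omega) hi, add_tsub_cancel_right, ih (by omega), hd i (by omega),
      iteratedPartialSum_zero_succ, add_comm]

theorem eq_iteratedPartialSum_succ_of_recurrence {u S T : ℕ → R} {j N : ℕ}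
    (hS : ∀ i, j ≤ i → i < N → S i = iteratedPartialSum u j i) (h0 : T (j + 1) = u 0)
    (hstep : ∀ i, j + 2 ≤ i → i ≤ N → T i = S (i - 1) + T (i - 1))
    (i : ℕ) (hji : j + 1 ≤ i) (hi : i ≤ N) : T i = iteratedPartialSum u (j + 1) i := by
  induction i, hji using Nat.le_induction with
  | base => rw [h0, iteratedPartialSum_self]
  | succ i hji ih =>
    rw [hstep (i + 1) (by omega) hi, add_tsub_cancel_right, hS i (by omega) (by omega),
      ih (by omega), iteratedPartialSum_succ_succ]

end IteratedPartialSum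

theorem pow_mul_iteratedDeriv_eq_iteratedPartialSum {𝕜 : Type*} [NontriviallyNormedField 𝕜]
    (c : ℕ → 𝕜) (N j : ℕ) (x : 𝕜) :
    x ^ j * iteratedDeriv j (fun y => ∑ l ∈ range (N + 1), c l * y ^ l) x
      = j ! * iteratedPartialSum (fun k => c (N - k) * x ^ (N - k)) j N := by
  rw [pow_mul_iteratedDeriv_sum_monomial, iteratedPartialSum_reverse (fun l => c l * x ^ l)]

theorem pow_succ_add_sum_Icc_add_eq_sum_range {R : Type*} [CommSemiring R]
    (n : ℕ) (a : ℕ → R) (a₀ x : R) :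
    x ^ (n + 1) + ∑ l ∈ Icc 1 n, a l * x ^ l + a₀
      = ∑ l ∈ range (n + 2), Function.update (Function.update a 0 a₀) (n + 1) 1 l * x ^ l := by
  rw [range_eq_Ico, sum_eq_sum_Ico_succ_bot (by omega), sum_Ico_succ_top (by omega), zero_add,
    Ico_add_one_right_eq_Icc]
  have hmid : ∀ l ∈ Icc 1 n, Function.update (Function.update a 0 a₀) (n + 1) 1 l = a l :=
    fun l hl => by
      have := mem_Icc.mp hl
      rw [Function.update_of_ne (by omega), Function.update_of_ne (by omega)]
  rw [sum_congr rfl fun l hl => congrArg (· * x ^ l) (hmid l hl),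
    Function.update_of_ne n.succ_ne_zero.symm, Function.update_self, Function.update_self,
    pow_zero, mul_one, one_mul]
  ring

theorem shaw_traub_evaluates_general
    (n : ℕ) (hn : 2 ≤ n) (a : ℕ → ℝ) (b : ℝ)
    (p : ℝ → ℝ)
    (hp : ∀ x : ℝ, p x =
      x ^ (n + 1) + (∑ l ∈ Finset.Icc 1 n, a l * x ^ l) + (a 0 - b))
    (r : ℝ)
    (Tm1 T0 T1 T2 : ℕ → ℝ)
    (hTm1 : ∀ i : ℕ, i ≤ n - 1 → Tm1 i = a (n - i) * r ^ (n - i))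
    (hTm1n : Tm1 n = a 0 - b)
    (hT00 : T0 0 = r ^ (n + 1))
    (hT0 : ∀ i : ℕ, 1 ≤ i → i ≤ n + 1 → T0 i = Tm1 (i - 1) + T0 (i - 1))
    (hT11 : T1 1 = T0 0)
    (hT1 : ∀ i : ℕ, 2 ≤ i → i ≤ n + 1 → T1 i = T0 (i - 1) + T1 (i - 1))
    (hT22 : T2 2 = T0 0)
    (hT2 : ∀ i : ℕ, 3 ≤ i → i ≤ n + 1 → T2 i = T1 (i - 1) + T2 (i - 1)) :
    T0 (n + 1) = p r ∧
      T1 (n + 1) = r * deriv p r ∧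
      2 * T2 (n + 1) = r ^ 2 * deriv (deriv p) r := by
  set c := Function.update (Function.update a 0 (a 0 - b)) (n + 1) 1
  set u : ℕ → ℝ := fun k => c (n + 1 - k) * r ^ (n + 1 - k)
  have hu0 : T0 0 = u 0 := by simp [u, c, hT00]
  have hTm1u (i : ℕ) (hi : i < n + 1) : Tm1 i = u (i + 1) := by
    rcases Nat.lt_succ_iff_lt_or_eq.mp hi with hi | rfl
    · have : n + 1 - (i + 1) = n - i := by omega
      simp [u, c, hTm1 i (by omega), this, show n - i ≠ 0 by omega, show n - i ≠ n + 1 by omega]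
    · simp [u, c, hTm1n]
  have hT0u := eq_iteratedPartialSum_zero_of_recurrence hu0 hT0 hTm1u
  have hT1u := eq_iteratedPartialSum_succ_of_recurrence (fun i _ hi => hT0u i hi.le)
    (hT11.trans hu0) hT1
  have hT2u := eq_iteratedPartialSum_succ_of_recurrence (fun i h hi => hT1u i h hi.le)
    (hT22.trans hu0) hT2
  have key (j : ℕ) : r ^ j * iteratedDeriv j p r = j ! * iteratedPartialSum u j (n + 1) := by
    rw [funext hp, funext fun x => pow_succ_add_sum_Icc_add_eq_sum_range n a (a 0 - b) x]
    exact pow_mul_iteratedDeriv_eq_iteratedPartialSum c (n + 1) j r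
  refine ⟨?_, ?_, ?_⟩
  · rw [hT0u (n + 1) le_rfl]
    simpa using (key 0).symm
  · rw [hT1u (n + 1) (by omega) le_rfl]
    simpa using (key 1).symm
  · rw [hT2u (n + 1) (by omega) le_rfl]
    simpa [iteratedDeriv_succ] using (key 2).symm

/-- The modified Shaw–Traub algorithm simultaneously evaluates `p`,
`p'` and `p''`: for every real `r ≠ 0`, `T⁰_{n+1} = p(r)`, `T¹_{n+1} = r·p'(r)`,
and `2·T²_{n+1} = r²·p''(r)`. -/
theorem shaw_traub_evaluates
    (n : ℕ) (hn : 2 ≤ n) (a : ℕ → ℝ) (b : ℝ)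
    (p : ℝ → ℝ)
    (hp : ∀ x : ℝ, p x =
      x ^ (n + 1) + (∑ l ∈ Finset.Icc 1 n, a l * x ^ l) + (a 0 - b))
    (r : ℝ) (hr : r ≠ 0)
    (Tm1 T0 T1 T2 : ℕ → ℝ)
    (hTm1 : ∀ i : ℕ, i ≤ n - 1 → Tm1 i = a (n - i) * r ^ (n - i))
    (hTm1n : Tm1 n = a 0 - b)
    (hT00 : T0 0 = r ^ (n + 1))
    (hT0 : ∀ i : ℕ, 1 ≤ i → i ≤ n + 1 → T0 i = Tm1 (i - 1) + T0 (i - 1))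
    (hT11 : T1 1 = T0 0)
    (hT1 : ∀ i : ℕ, 2 ≤ i → i ≤ n + 1 → T1 i = T0 (i - 1) + T1 (i - 1))
    (hT22 : T2 2 = T0 0)
    (hT2 : ∀ i : ℕ, 3 ≤ i → i ≤ n + 1 → T2 i = T1 (i - 1) + T2 (i - 1)) :
    T0 (n + 1) = p r ∧
      T1 (n + 1) = r * deriv p r ∧
      2 * T2 (n + 1) = r ^ 2 * deriv (deriv p) r :=
  shaw_traub_evaluates_general n hn a b p hp r Tm1 T0 T1 T2 hTm1 hTm1n hT00 hT0 hT11 hT1 hT22 hT2
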